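/- arXiv:1911.10304 — 5 statements merged into one kernel-verified Lean document; each statement's English description precedes it below -/
import Mathlib

section
/- Let N be a symmetric n×n real matrix with nonnegative entries and operator norm at most 1, and suppose at most k eigenvalues of N exceed τ > 0. Then for every integer t ≥ 1, Tr(N^{2t+2}) ≤ 2(k + n·τ^{2t+1}). -/
/-!
Write `λ` for the eigenvalues and `m = 2t + 1`. Since `|λ| ≤ 1`, `Tr N^{m+1} = ∑ λ^{m+1} ≤ ∑ |λ|^m`.
For odd `m`, `|λ|^m + λ^m = 2 (λ⁺)^m`, and `∑ λ^m = Tr N^m ≥ 0` because `N` has nonnegative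
entries; hence `∑ |λ|^m ≤ 2 ∑ (λ⁺)^m`, so the negative eigenvalues cost at most a factor 2.
Finally each `(λ⁺)^m` is at most `1` when `λ > τ` and at most `τ^m` otherwise.
-/

open Matrix Finset

theorem abs_pow_add_pow_eq_two_mul_posPart_pow {m : ℕ} (hm : Odd m) (x : ℝ) :
    |x| ^ m + x ^ m = 2 * x⁺ ^ m := by
  rcases le_total 0 x with hx | hx
  · rw [abs_of_nonneg hx, posPart_eq_self.mpr hx]; ring
  · rw [abs_of_nonpos hx, posPart_eq_zero.mpr hx, hm.neg_pow, zero_pow hm.pos.ne']; ring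

theorem posPart_pow_le_ite_add_pow {x τ : ℝ} (hx : x ≤ 1) (hτ : 0 ≤ τ) (m : ℕ) :
    x⁺ ^ m ≤ (if τ < x then 1 else 0) + τ ^ m := by
  split_ifs with h
  · have : x⁺ ^ m ≤ 1 := pow_le_one₀ (posPart_nonneg x) (sup_le hx zero_le_one)
    linarith [pow_nonneg hτ m]
  · rw [zero_add]
    exact pow_le_pow_left₀ (posPart_nonneg x) (sup_le (not_lt.mp h) hτ) m

theorem pow_succ_le_abs_pow {x : ℝ} (hx : |x| ≤ 1) (m : ℕ) : x ^ (m + 1) ≤ |x| ^ m :=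
  calc x ^ (m + 1) ≤ |x| ^ (m + 1) := abs_pow x (m + 1) ▸ le_abs_self _
    _ ≤ |x| ^ m := pow_le_pow_of_le_one (abs_nonneg x) hx m.le_succ

theorem sum_pow_succ_le_of_sum_pow_nonneg {ι : Type*} [Fintype ι] {x : ι → ℝ}
    (hx : ∀ i, |x i| ≤ 1) {m : ℕ} (hm : Odd m) (hsum : 0 ≤ ∑ i, x i ^ m) {τ : ℝ} (hτ : 0 ≤ τ) :
    ∑ i, x i ^ (m + 1) ≤ 2 * (#{i | τ < x i} + Fintype.card ι * τ ^ m) :=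
  calc ∑ i, x i ^ (m + 1) ≤ ∑ i, |x i| ^ m := sum_le_sum fun i _ => pow_succ_le_abs_pow (hx i) m
    _ ≤ ∑ i, (|x i| ^ m + x i ^ m) := by rw [sum_add_distrib]; exact le_add_of_nonneg_right hsum
    _ = 2 * ∑ i, (x i)⁺ ^ m := by
      simp only [abs_pow_add_pow_eq_two_mul_posPart_pow hm, mul_sum]
    _ ≤ 2 * ∑ i, ((if τ < x i then 1 else 0) + τ ^ m) := by
      gcongr with i
      exact posPart_pow_le_ite_add_pow (le_of_abs_le (hx i)) hτ m
    _ = 2 * (#{i | τ < x i} + Fintype.card ι * τ ^ m) := by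
      rw [sum_add_distrib, sum_boole, sum_const, card_univ, nsmul_eq_mul]

theorem Matrix.IsHermitian.trace_pow_eq_sum_eigenvalues_pow {𝕜 ι : Type*} [RCLike 𝕜] [Fintype ι]
    [DecidableEq ι] {A : Matrix ι ι 𝕜} (hA : A.IsHermitian) (m : ℕ) :
    (A ^ m).trace = ∑ i, (hA.eigenvalues i : 𝕜) ^ m := by
  conv_lhs => rw [hA.spectral_theorem, ← map_pow, Unitary.conjStarAlgAut_apply, trace_mul_cycle,
    Unitary.coe_star_mul_self, one_mul, diagonal_pow, trace_diagonal]
  simp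

theorem Matrix.IsHermitian.sum_eigenvalues_pow_nonneg {ι : Type*} [Fintype ι] [DecidableEq ι]
    {A : Matrix ι ι ℝ} (hA : A.IsHermitian) (hA₀ : ∀ i j, 0 ≤ A i j) (m : ℕ) :
    0 ≤ ∑ i, hA.eigenvalues i ^ m := by
  have := hA.trace_pow_eq_sum_eigenvalues_pow m
  simp only [RCLike.ofReal_real_eq_id, id] at this
  exact this ▸ sum_nonneg fun i _ => pow_apply_nonneg hA₀ m i i

theorem stmt_0_general {n : ℕ} (N : Matrix (Fin n) (Fin n) ℝ) (hN : N.IsHermitian)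
    (hpos : ∀ i j, 0 ≤ N i j)
    (hnorm : ∀ i, |hN.eigenvalues i| ≤ 1)
    (τ : ℝ) (hτ : 0 < τ) (k : ℕ)
    (hrank : (Finset.univ.filter (fun i => τ < hN.eigenvalues i)).card ≤ k)
    (t : ℕ) :
    (N ^ (2 * t + 2)).trace ≤ 2 * (k + n * τ ^ (2 * t + 1)) := by
  have htrace := hN.trace_pow_eq_sum_eigenvalues_pow (2 * t + 2)
  simp only [RCLike.ofReal_real_eq_id, id] at htrace
  rw [htrace]
  calc ∑ i, hN.eigenvalues i ^ (2 * t + 1 + 1)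
      ≤ 2 * (#{i | τ < hN.eigenvalues i} + Fintype.card (Fin n) * τ ^ (2 * t + 1)) :=
        sum_pow_succ_le_of_sum_pow_nonneg hnorm (odd_two_mul_add_one t)
          (hN.sum_eigenvalues_pow_nonneg hpos _) hτ.le
    _ ≤ 2 * (k + n * τ ^ (2 * t + 1)) := by
      rw [Fintype.card_fin]; gcongr

/-- Trace bound for low threshold rank: if the symmetric matrix `N` has nonnegative
entries, operator norm at most 1 (all eigenvalues in `[-1,1]`), and at most `k`
eigenvalues exceeding `τ > 0`, then `Tr(N^{2t+2}) ≤ 2(k + n·τ^{2t+1})`. -/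
theorem stmt_0 {n : ℕ} (N : Matrix (Fin n) (Fin n) ℝ) (hN : N.IsHermitian)
    (hpos : ∀ i j, 0 ≤ N i j)
    (hnorm : ∀ i, |hN.eigenvalues i| ≤ 1)
    (τ : ℝ) (hτ : 0 < τ) (k : ℕ)
    (hrank : (Finset.univ.filter (fun i => τ < hN.eigenvalues i)).card ≤ k)
    (t : ℕ) (ht : 1 ≤ t) :
    (N ^ (2 * t + 2)).trace ≤ 2 * (k + n * τ ^ (2 * t + 1)) :=
  stmt_0_general N hN hpos hnorm τ hτ k hrank t
end

section
/- Let π be the stationary distribution of the random walk on a weighted graph with symmetric adjacency matrix A (nonnegative, positive row sums), P = D^{-1}A, and let c : [n]×[n] → [0,∞) be any nonnegative function. Then Σ_{i,j} π_i (P^t)_{ij} c(i,j) ≤ sqrt(Tr(N^{2t})) · sqrt(Σ_{i,j} π_i π_j c(i,j)²), where N = D^{-1/2} A D^{-1/2} and π_i = D_{ii}/Tr(D). -/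
/-!
The walk is reversible: conjugating `P = D⁻¹A` by `D^{1/2}` gives the symmetric matrix `N`, so
`π_i (P^t)_{ij} = √π_i (N^t)_{ij} √π_j`. Cauchy–Schwarz over the pairs `(i, j)` then bounds the sum
by `‖N^t‖_F · (Σ π_i π_j c(i,j)²)^{1/2}`, and `‖N^t‖_F² = Tr(N^t (N^t)ᵀ) = Tr(N^{2t})` by symmetry.
-/

open Matrix Finset

theorem Matrix.trace_mul_transpose_self {ι : Type*} [Fintype ι] (M : Matrix ι ι ℝ) :
    (M * Mᵀ).trace = ∑ i, ∑ j, M i j ^ 2 := by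
  simp [trace, mul_apply, sq]

theorem Matrix.IsSymm.sum_mul_le_sqrt_trace_mul_self {ι : Type*} [Fintype ι]
    {M : Matrix ι ι ℝ} (hM : M.IsSymm) (g : ι → ι → ℝ) :
    ∑ i, ∑ j, M i j * g i j ≤ √(M * M).trace * √(∑ i, ∑ j, g i j ^ 2) := by
  have hMM : M * M = M * Mᵀ := by rw [hM.eq]
  rw [hMM, trace_mul_transpose_self]
  simpa only [Fintype.sum_prod_type] using
    Real.sum_mul_le_sqrt_mul_sqrt univ (fun p : ι × ι => M p.1 p.2) (fun p => g p.1 p.2)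

theorem Matrix.IsSymm.diagonal_mul_mul_diagonal {ι α : Type*} [Fintype ι] [DecidableEq ι]
    [CommSemiring α] {A : Matrix ι ι α} (hA : A.IsSymm) (v : ι → α) :
    (diagonal v * A * diagonal v).IsSymm := by
  rw [IsSymm, transpose_mul, transpose_mul, diagonal_transpose, hA.eq, Matrix.mul_assoc]

section Conjugation

variable {ι K : Type*} [Fintype ι] [DecidableEq ι] [Field K] (A : Matrix ι ι K) {u : ι → K}

theorem Matrix.semiconjBy_diagonal_inv_sq_mul (hu : ∀ i, u i ≠ 0) :
    SemiconjBy (diagonal u) (diagonal (fun i => (u i ^ 2)⁻¹) * A)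
      (diagonal (fun i => (u i)⁻¹) * A * diagonal (fun i => (u i)⁻¹)) := by
  have hl : (fun i => u i * (u i ^ 2)⁻¹) = fun i => (u i)⁻¹ := by
    ext i; field_simp [hu i]
  have hr : (fun i => (u i)⁻¹ * u i) = fun _ => 1 := by
    ext i; exact inv_mul_cancel₀ (hu i)
  rw [SemiconjBy, ← Matrix.mul_assoc, diagonal_mul_diagonal, hl, Matrix.mul_assoc _ (diagonal _),
    diagonal_mul_diagonal, hr, diagonal_one, Matrix.mul_one]

theorem Matrix.sq_mul_diagonal_inv_sq_mul_pow_apply (hu : ∀ i, u i ≠ 0) (t : ℕ) (i j : ι) :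
    u i ^ 2 * ((diagonal (fun i => (u i ^ 2)⁻¹) * A) ^ t) i j =
      u i * ((diagonal (fun i => (u i)⁻¹) * A * diagonal (fun i => (u i)⁻¹)) ^ t) i j * u j := by
  have h := congrFun (congrFun ((semiconjBy_diagonal_inv_sq_mul A hu).pow_right t) i) j
  rw [diagonal_mul, mul_diagonal] at h
  rw [sq, mul_assoc, h]
  ring

end Conjugation

theorem stmt_5_general {n : ℕ} (A : Matrix (Fin n) (Fin n) ℝ) (hA : A.IsSymm)
    (d : Fin n → ℝ) (hdpos : ∀ i, 0 < d i) (c : Fin n → Fin n → ℝ)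
    (t : ℕ) (π : Fin n → ℝ) (hπ : ∀ i, π i = d i / ∑ j, d j) :
    ∑ i, ∑ j, π i * ((Matrix.diagonal (fun i => (d i)⁻¹) * A) ^ t) i j * c i j ≤
      Real.sqrt (((Matrix.diagonal (fun i => (Real.sqrt (d i))⁻¹) * A *
          Matrix.diagonal (fun i => (Real.sqrt (d i))⁻¹)) ^ (2 * t)).trace) *
        Real.sqrt (∑ i, ∑ j, π i * π j * c i j ^ 2) := by
  set u : Fin n → ℝ := fun i => √(d i)
  set N := diagonal (fun i => (u i)⁻¹) * A * diagonal (fun i => (u i)⁻¹)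
  set r := √(∑ j, d j)
  have hu_sq : ∀ i, u i ^ 2 = d i := fun i => Real.sq_sqrt (hdpos i).le
  have hr_sq : ∑ j, d j = r ^ 2 := (Real.sq_sqrt (sum_nonneg fun j _ => (hdpos j).le)).symm
  have hπ_sqrt : ∀ i, √(π i) = u i / r := fun i => by rw [hπ, Real.sqrt_div (hdpos i).le]
  have hπ_nonneg : ∀ i, 0 ≤ π i := fun i => by
    rw [hπ, hr_sq]; exact div_nonneg (hdpos i).le (sq_nonneg r)
  have hP : diagonal (fun i => (d i)⁻¹) * A = diagonal (fun i => (u i ^ 2)⁻¹) * A := by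
    simp only [hu_sq]
  have hreversible : ∀ i j, π i * ((diagonal (fun i => (d i)⁻¹) * A) ^ t) i j * c i j =
      (N ^ t) i j * (√(π i) * √(π j) * c i j) := fun i j => by
    rw [hP, hπ_sqrt, hπ_sqrt, hπ, ← hu_sq, hr_sq]
    linear_combination (c i j / r ^ 2) *
      sq_mul_diagonal_inv_sq_mul_pow_apply A (fun i => (Real.sqrt_pos.2 (hdpos i)).ne') t i j
  calc _ = ∑ i, ∑ j, (N ^ t) i j * (√(π i) * √(π j) * c i j) := by simp only [hreversible]
    _ ≤ _ := ((hA.diagonal_mul_mul_diagonal _).pow t).sum_mul_le_sqrt_trace_mul_self _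
    _ = _ := by
      rw [← pow_add, ← two_mul]
      congr 2
      simp only [mul_pow, Real.sq_sqrt (hπ_nonneg _)]

/-- Cauchy–Schwarz bound for correlations along random walks:
`Σ_{i,j} π_i (P^t)_{ij} c(i,j) ≤ sqrt(Tr(N^{2t})) · sqrt(Σ_{i,j} π_i π_j c(i,j)²)`. -/
theorem stmt_5 {n : ℕ} (A : Matrix (Fin n) (Fin n) ℝ) (hA : A.IsSymm)
    (hpos : ∀ i j, 0 ≤ A i j) (d : Fin n → ℝ) (hd : ∀ i, d i = ∑ j, A i j)
    (hdpos : ∀ i, 0 < d i) (c : Fin n → Fin n → ℝ) (hc : ∀ i j, 0 ≤ c i j)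
    (t : ℕ) (π : Fin n → ℝ) (hπ : ∀ i, π i = d i / ∑ j, d j) :
    ∑ i, ∑ j, π i * ((Matrix.diagonal (fun i => (d i)⁻¹) * A) ^ t) i j * c i j ≤
      Real.sqrt (((Matrix.diagonal (fun i => (Real.sqrt (d i))⁻¹) * A *
          Matrix.diagonal (fun i => (Real.sqrt (d i))⁻¹)) ^ (2 * t)).trace) *
        Real.sqrt (∑ i, ∑ j, π i * π j * c i j ^ 2) :=
  stmt_5_general A hA d hdpos c t π hπ
end

section
/- Let C ∈ ℝ^{(k+1)×(k+1)} be positive semidefinite with C_{jj} ≤ 1 for all j. Suppose Σ_{j=1}^{k} |C_{j,k+1}| ≥ δk for some δ > 0 and k ≥ 4/δ². Then (1/(k(k-1))) Σ_{j≠ℓ, j,ℓ ≤ k} |C_{jℓ}| ≥ δ²/4. -/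
set_option maxHeartbeats 1000000


open Matrix Finset

/-- If a PSD matrix with diagonal at most 1 has average absolute correlation at least `δ`
between the last coordinate and the first `k` coordinates, and `k ≥ 4/δ²`, then the
average off-diagonal absolute entry among the first `k` coordinates is at least `δ²/4`. -/
theorem stmt_7 {k : ℕ} (C : Matrix (Fin (k + 1)) (Fin (k + 1)) ℝ) (hC : C.PosSemidef)
    (hdiag : ∀ j, C j j ≤ 1) (δ : ℝ) (hδ : 0 < δ)
    (hcorr : δ * k ≤ ∑ j ∈ Finset.univ.filter (· ≠ Fin.last k), |C j (Fin.last k)|)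
    (hk : (4 : ℝ) / δ ^ 2 ≤ k) :
    δ ^ 2 / 4 ≤ (1 / (k * ((k : ℝ) - 1))) *
      ∑ j ∈ Finset.univ.filter (· ≠ Fin.last k),
        ∑ l ∈ Finset.univ.filter (· ≠ Fin.last k), if j ≠ l then |C j l| else 0 := by
  classical
  set P : Finset (Fin (k+1)) := Finset.univ.filter (· ≠ Fin.last k) with hPdef
  set T : ℝ := ∑ j ∈ P, ∑ l ∈ P, if j ≠ l then |C j l| else 0 with hTdef
  set S : ℝ := ∑ j ∈ P, |C j (Fin.last k)| with hSdef
  have hTnonneg : 0 ≤ T := by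
    apply Finset.sum_nonneg; intro i _; apply Finset.sum_nonneg; intro j _
    split <;> positivity
  have hcardP : (P.card : ℝ) = k := by
    rw [hPdef, Finset.filter_ne', Finset.card_erase_of_mem (Finset.mem_univ _)]
    simp
  set u : Fin (k+1) → ℝ := fun i =>
    if i = Fin.last k then -(δ*k) else (if C i (Fin.last k) < 0 then -1 else 1) with hu
  have hsplit : ∀ f : Fin (k+1) → ℝ, ∑ i, f i = (∑ i ∈ P, f i) + f (Fin.last k) := by
    intro f
    rw [hPdef, Finset.filter_ne']
    exact (Finset.sum_erase_add _ _ (Finset.mem_univ _)).symm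
  have hq : (0:ℝ) ≤ ∑ i, ∑ j, u i * C i j * u j := by
    have := hC.dotProduct_mulVec_nonneg u
    simpa [dotProduct, mulVec, Finset.mul_sum, mul_assoc] using this
  have hulast : u (Fin.last k) = -(δ*k) := by simp [hu]
  have huP : ∀ i ∈ P, (u i = -1 ∨ u i = 1) ∧ u i * C i (Fin.last k) = |C i (Fin.last k)| := by
    intro i hi
    have hiP : i ≠ Fin.last k := by simpa [hPdef] using hi
    rw [hu]
    simp only []
    rw [if_neg hiP]
    by_cases h : C i (Fin.last k) < 0
    · rw [if_pos h]
      exact ⟨Or.inl rfl, by rw [abs_of_neg h]; ring⟩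
    · rw [if_neg h]
      exact ⟨Or.inr rfl, by rw [abs_of_nonneg (not_lt.mp h)]; ring⟩
  -- expand the quadratic form
  rw [hsplit, Finset.sum_congr rfl (fun i _ => hsplit (fun j => u i * C i j * u j)),
      hsplit (fun j => u (Fin.last k) * C (Fin.last k) j * u j)] at hq
  rw [Finset.sum_add_distrib] at hq
  -- bound the main block
  have hA : ∑ i ∈ P, ∑ j ∈ P, u i * C i j * u j ≤ (k : ℝ) + T := by
    have hb : ∀ i ∈ P, ∀ j ∈ P, u i * C i j * u j ≤
        (if i = j then (1:ℝ) else 0) + (if i ≠ j then |C i j| else 0) := by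
      intro i hi j hj
      have hui := (huP i hi).1
      have huj := (huP j hj).1
      rcases eq_or_ne i j with rfl | hij
      · rw [if_pos rfl, if_neg (by simp), add_zero]
        have h1 : u i * u i = 1 := by rcases hui with h | h <;> rw [h] <;> ring
        have h0 : 0 ≤ C i i := hC.dotProduct_mulVec_nonneg (fun j => if j = i then 1 else 0) |>.trans_eq (by simp [dotProduct, mulVec, Finset.sum_ite_eq])
        calc u i * C i i * u i = (u i * u i) * C i i := by ring
          _ = C i i := by rw [h1, one_mul]
          _ ≤ 1 := hdiag i
      · simp only [if_neg hij, if_pos hij, zero_add]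
        calc u i * C i j * u j ≤ |u i * C i j * u j| := le_abs_self _
          _ = |u i| * |C i j| * |u j| := by rw [abs_mul, abs_mul]
          _ = |C i j| := by
              have h1 : |u i| = 1 := by rcases hui with h | h <;> simp [h]
              have h2 : |u j| = 1 := by rcases huj with h | h <;> simp [h]
              rw [h1, h2]; ring
    calc ∑ i ∈ P, ∑ j ∈ P, u i * C i j * u j
        ≤ ∑ i ∈ P, ∑ j ∈ P, ((if i = j then (1:ℝ) else 0) + (if i ≠ j then |C i j| else 0)) :=
          Finset.sum_le_sum (fun i hi => Finset.sum_le_sum (fun j hj => hb i hi j hj))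
      _ = (∑ i ∈ P, ∑ j ∈ P, (if i = j then (1:ℝ) else 0)) + T := by
          rw [hTdef, ← Finset.sum_add_distrib]
          exact Finset.sum_congr rfl fun i _ => Finset.sum_add_distrib
      _ = (k : ℝ) + T := by
          rw [← hcardP]
          congr 1
          rw [Finset.card_eq_sum_ones P]
          push_cast
          exact Finset.sum_congr rfl fun i hi => by simp [Finset.sum_ite_eq, hi]
  have hB1 : ∑ i ∈ P, u i * C i (Fin.last k) * u (Fin.last k) = -(δ*k) * S := by
    rw [hSdef, Finset.mul_sum]
    refine Finset.sum_congr rfl fun i hi => ?_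
    rw [hulast, (huP i hi).2.symm]; ring
  have hB2 : ∑ j ∈ P, u (Fin.last k) * C (Fin.last k) j * u j = -(δ*k) * S := by
    rw [hSdef, Finset.mul_sum]
    refine Finset.sum_congr rfl fun j hj => ?_
    have hsym : C (Fin.last k) j = C j (Fin.last k) := by
      have := hC.1.apply (Fin.last k) j; simpa using this.symm
    rw [hulast, hsym, (huP j hj).2.symm]; ring
  have hcorner : u (Fin.last k) * C (Fin.last k) (Fin.last k) * u (Fin.last k) ≤ (δ*k)^2 := by
    rw [hulast]
    have h0 : (0:ℝ) ≤ (δ*k)^2 := sq_nonneg _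
    have h1 : (0:ℝ) ≤ C (Fin.last k) (Fin.last k) := by
      have := hC.dotProduct_mulVec_nonneg (fun j => if j = Fin.last k then 1 else 0)
      simpa [dotProduct, mulVec, Finset.sum_ite_eq] using this
    nlinarith [hdiag (Fin.last k)]
  have hδk : (0:ℝ) ≤ δ * k := by positivity
  have hSge : δ * k ≤ S := hcorr
  have hmul : (δ*k) * (δ*k) ≤ (δ*k) * S := mul_le_mul_of_nonneg_left hSge hδk
  have key : δ^2 * k^2 - k ≤ T := by nlinarith [hq, hA, hB1, hB2, hcorner]
  have hδ2k : (4:ℝ) ≤ δ^2 * k := by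
    rw [div_le_iff₀ (by positivity)] at hk
    linarith
  -- now case on k
  rcases Nat.lt_or_ge k 2 with hk2 | hk2
  · -- k = 0 or 1 : derive contradiction
    rcases (by omega : k = 0 ∨ k = 1) with rfl | rfl
    · exfalso
      norm_num at hδ2k
    · exfalso
      have hP1 : P = {0} := by rw [hPdef]; decide
      have hT0 : T = 0 := by rw [hTdef, hP1]; simp
      have : (1:ℝ) ≤ δ^2 * 1^2 - 1 := by nlinarith
      rw [hT0] at key
      push_cast at key
      nlinarith
  · have hkR : (2:ℝ) ≤ (k:ℝ) := by exact_mod_cast hk2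
    have hden : (0:ℝ) < (k:ℝ) * ((k:ℝ) - 1) := by nlinarith
    rw [one_div, inv_mul_eq_div, le_div_iff₀ hden]
    -- need δ^2/4 * (k*(k-1)) ≤ T
    nlinarith [key, hδ2k, sq_nonneg δ, mul_pos hδ (mul_pos hδ (lt_of_lt_of_le (by norm_num) hkR))]
end

section
/- Let X₁,...,Xₙ be random variables each taking values in a finite set [q], let μ be a probability distribution on [n], and let k be a positive integer. Then there exists t with 0 ≤ t ≤ k-1 such that E_{i₁,...,i_t ~ μ iid} E_{a,b ~ μ iid} I(X_a ; X_b | X_{i₁},...,X_{i_t}) ≤ (log q)/k. -/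
open Finset
open scoped Classical

noncomputable section

/-- Probability of an event under a finitely supported probability mass function. -/
def pr {Ω : Type*} [Fintype Ω] (P : Ω → ℝ) (E : Ω → Prop) : ℝ :=
  ∑ ω, if E ω then P ω else 0

/-- Conditional mutual information `I(A ; B | C)` (in nats) of finitely-valued random
variables on a finite probability space with pmf `P`, where `C` is a tuple of `t`
conditioning variables. -/
def condMI {Ω : Type*} [Fintype Ω] {q t : ℕ} (P : Ω → ℝ)
    (A B : Ω → Fin q) (C : Ω → (Fin t → Fin q)) : ℝ :=
  ∑ a : Fin q, ∑ b : Fin q, ∑ c : Fin t → Fin q,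
    pr P (fun ω => A ω = a ∧ B ω = b ∧ C ω = c) *
      Real.log (pr P (fun ω => A ω = a ∧ B ω = b ∧ C ω = c) * pr P (fun ω => C ω = c) /
        (pr P (fun ω => A ω = a ∧ C ω = c) * pr P (fun ω => B ω = b ∧ C ω = c)))

/-!
By the chain rule, `I(X_a ; X_b | X_I) = H(X_a | X_I) - H(X_a | X_b, X_I)`. Averaging with `b ~ μ`
independent of the i.i.d. tuple `I ~ μ^t` turns the second term into the same average at depth
`t + 1`, so the expected mutual information at depth `t` is `D t - D (t + 1)`, where `D t` is the
expected conditional entropy of `X_a` given `t` i.i.d. coordinates. Over the depths `t < k` these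
telescope to `D 0 - D k`, which is at most `log q` since conditional entropies lie in `[0, log q]`;
so one of the `k` terms is at most `log q / k`.
-/

open Real

section Entropy

lemma neg_mul_log_div_le {p s c : ℝ} (hp : 0 ≤ p) (hps : p ≤ s) (hc : 0 < c) :
    -(p * log (p / s)) ≤ p * log c + s / c - p := by
  rcases hp.eq_or_lt with rfl | hp
  · simpa using div_nonneg hps hc.le
  have hs : 0 < s := hp.trans_le hps
  have h := mul_le_mul_of_nonneg_left (log_le_sub_one_of_pos (x := s / (c * p)) (by positivity))
    hp.le
  rw [log_div hs.ne' (by positivity), log_mul hc.ne' hp.ne'] at h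
  rw [log_div hp.ne' hs.ne']
  have : p * (s / (c * p) - 1) = s / c - p := by field_simp
  linarith

lemma neg_sum_mul_log_div_sum_le {α : Type*} [Fintype α] (p : α → ℝ) (hp : ∀ a, 0 ≤ p a) :
    -∑ a, p a * log (p a / ∑ b, p b) ≤ (∑ a, p a) * log (Fintype.card α) := by
  cases isEmpty_or_nonempty α
  · simp
  have hc : (0 : ℝ) < Fintype.card α := by exact_mod_cast Fintype.card_pos
  calc -∑ a, p a * log (p a / ∑ b, p b)
      = ∑ a, -(p a * log (p a / ∑ b, p b)) := (sum_neg_distrib _).symm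
    _ ≤ ∑ a, (p a * log (Fintype.card α) + (∑ b, p b) / Fintype.card α - p a) :=
        sum_le_sum fun a _ =>
          neg_mul_log_div_le (hp a) (single_le_sum (fun b _ => hp b) (mem_univ a)) hc
    _ = (∑ a, p a) * log (Fintype.card α) := by
        rw [sum_sub_distrib, sum_add_distrib, ← sum_mul, sum_const, card_univ, nsmul_eq_mul,
          mul_div_cancel₀ _ hc.ne']
        ring

variable {Ω : Type*} [Fintype Ω] (P : Ω → ℝ)

lemma pr_nonneg (hP : ∀ ω, 0 ≤ P ω) (E : Ω → Prop) : 0 ≤ pr P E :=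
  sum_nonneg fun ω _ => by split <;> simp [hP ω]

lemma pr_mono (hP : ∀ ω, 0 ≤ P ω) {E F : Ω → Prop} (h : ∀ ω, E ω → F ω) :
    pr P E ≤ pr P F := by
  refine sum_le_sum fun ω _ => ?_
  by_cases hE : E ω
  · simp [hE, h ω hE]
  · simp only [if_neg hE]; split <;> simp [hP ω]

lemma pr_congr {E F : Ω → Prop} (h : ∀ ω, E ω ↔ F ω) : pr P E = pr P F := by
  simp only [pr, h]

lemma sum_pr_eq_and {β : Type*} [Fintype β] (B : Ω → β) (E : Ω → Prop) :
    ∑ b, pr P (fun ω => B ω = b ∧ E ω) = pr P E := by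
  unfold pr
  rw [sum_comm]
  refine sum_congr rfl fun ω _ => ?_
  by_cases hE : E ω <;> simp [hE]

lemma sum_pr_eq (hP1 : ∑ ω, P ω = 1) {γ : Type*} [Fintype γ] (C : Ω → γ) :
    ∑ c, pr P (fun ω => C ω = c) = 1 := by
  simp only [pr]
  rw [← hP1, sum_comm]
  simp

variable {α γ : Type*} [Fintype α] [Fintype γ]

def condEntropy (A : Ω → α) (C : Ω → γ) : ℝ :=
  -∑ a, ∑ c, pr P (fun ω => A ω = a ∧ C ω = c) *
    log (pr P (fun ω => A ω = a ∧ C ω = c) / pr P (fun ω => C ω = c))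

lemma condEntropy_nonneg (hP : ∀ ω, 0 ≤ P ω) (A : Ω → α) (C : Ω → γ) :
    0 ≤ condEntropy P A C := by
  rw [condEntropy, neg_nonneg]
  refine sum_nonpos fun a _ => sum_nonpos fun c _ => ?_
  have hp := pr_nonneg P hP (fun ω => A ω = a ∧ C ω = c)
  have hpc := pr_mono P hP (E := fun ω => A ω = a ∧ C ω = c) fun ω h => h.2
  exact mul_nonpos_of_nonneg_of_nonpos hp
    (log_nonpos (div_nonneg hp (hp.trans hpc)) (div_le_one_of_le₀ hpc (hp.trans hpc)))

lemma condEntropy_le_log_card (hP : ∀ ω, 0 ≤ P ω) (hP1 : ∑ ω, P ω = 1)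
    (A : Ω → α) (C : Ω → γ) : condEntropy P A C ≤ log (Fintype.card α) := by
  calc condEntropy P A C
      = ∑ c, -∑ a, pr P (fun ω => A ω = a ∧ C ω = c) *
          log (pr P (fun ω => A ω = a ∧ C ω = c) /
            ∑ a', pr P (fun ω => A ω = a' ∧ C ω = c)) := by
        simp only [condEntropy, sum_pr_eq_and, sum_neg_distrib]
        rw [sum_comm]
    _ ≤ ∑ c, pr P (fun ω => C ω = c) * log (Fintype.card α) := by
        refine sum_le_sum fun c _ => ?_
        rw [← sum_pr_eq_and P A]
        exact neg_sum_mul_log_div_sum_le _ fun a => pr_nonneg P hP _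
    _ = log (Fintype.card α) := by rw [← sum_mul, sum_pr_eq P hP1, one_mul]

end Entropy

lemma Fin.sum_pi_succ {δ : Type*} [Fintype δ] {m : ℕ} (f : (Fin (m + 1) → δ) → ℝ) :
    ∑ c, f c = ∑ b, ∑ c : Fin m → δ, f (Fin.cons b c) := by
  rw [← (Fin.consEquiv fun _ => δ).sum_comp f, Fintype.sum_prod_type]
  rfl

section MutualInformation

variable {Ω : Type*} [Fintype Ω] (P : Ω → ℝ)

lemma condEntropy_cons {α β : Type*} [Fintype α] [Fintype β] {t : ℕ}
    (A : Ω → α) (B : Ω → β) (C : Ω → Fin t → β) :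
    condEntropy P A (fun ω => (Fin.cons (B ω) (C ω) : Fin (t + 1) → β)) =
      -∑ a, ∑ b, ∑ c, pr P (fun ω => A ω = a ∧ B ω = b ∧ C ω = c) *
        log (pr P (fun ω => A ω = a ∧ B ω = b ∧ C ω = c) /
          pr P (fun ω => B ω = b ∧ C ω = c)) := by
  simp only [condEntropy, Fin.sum_pi_succ (m := t), Fin.cons_inj]

lemma mul_log_mul_div_mul {x y z w : ℝ} (hx : 0 ≤ x) (hy : x ≤ y) (hz : x ≤ z) (hw : x ≤ w) :
    x * log (x * w / (y * z)) = x * log (x / z) - x * log (y / w) := by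
  rcases hx.eq_or_lt with rfl | hx
  · simp
  have hy := hx.trans_le hy
  have hz := hx.trans_le hz
  have hw := hx.trans_le hw
  rw [log_div (by positivity) (by positivity), log_mul hx.ne' hw.ne', log_mul hy.ne' hz.ne',
    log_div hx.ne' hz.ne', log_div hy.ne' hw.ne']
  ring

lemma condMI_eq_condEntropy_sub (hP : ∀ ω, 0 ≤ P ω) {q t : ℕ} (A B : Ω → Fin q)
    (C : Ω → Fin t → Fin q) :
    condMI P A B C = condEntropy P A C -
      condEntropy P A (fun ω => (Fin.cons (B ω) (C ω) : Fin (t + 1) → Fin q)) := by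
  have marginal : ∀ a, ∑ b, ∑ c, pr P (fun ω => A ω = a ∧ B ω = b ∧ C ω = c) *
        log (pr P (fun ω => A ω = a ∧ C ω = c) / pr P (fun ω => C ω = c)) =
      ∑ c, pr P (fun ω => A ω = a ∧ C ω = c) *
        log (pr P (fun ω => A ω = a ∧ C ω = c) / pr P (fun ω => C ω = c)) := fun a => by
    rw [sum_comm]
    refine sum_congr rfl fun c _ => ?_
    rw [← sum_mul, ← sum_pr_eq_and P B]
    exact congrArg (· * _) (sum_congr rfl fun b _ => pr_congr P fun ω => by tauto)
  calc condMI P A B C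
      = ∑ a, ∑ b, ∑ c, (pr P (fun ω => A ω = a ∧ B ω = b ∧ C ω = c) *
            log (pr P (fun ω => A ω = a ∧ B ω = b ∧ C ω = c) /
              pr P (fun ω => B ω = b ∧ C ω = c)) -
          pr P (fun ω => A ω = a ∧ B ω = b ∧ C ω = c) *
            log (pr P (fun ω => A ω = a ∧ C ω = c) / pr P (fun ω => C ω = c))) :=
        sum_congr rfl fun a _ => sum_congr rfl fun b _ => sum_congr rfl fun c _ =>
          mul_log_mul_div_mul (pr_nonneg P hP _) (pr_mono P hP fun ω h => ⟨h.1, h.2.2⟩)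
            (pr_mono P hP fun ω h => h.2) (pr_mono P hP fun ω h => h.2.2)
    _ = _ := by
        rw [condEntropy_cons, condEntropy]
        simp only [sum_sub_distrib, marginal]
        ring

end MutualInformation

section IidExpectation

variable {ι : Type*} [Fintype ι] (μ : ι → ℝ)

def iidExpect (t : ℕ) (F : (Fin t → ι) → ℝ) : ℝ :=
  ∑ I, (∏ s, μ (I s)) * F I

lemma iidExpect_zero (F : (Fin 0 → ι) → ℝ) : iidExpect μ 0 F = F Fin.elim0 := by
  simp [iidExpect, Subsingleton.elim _ (Fin.elim0 : Fin 0 → ι)]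

lemma iidExpect_succ {t : ℕ} (F : (Fin (t + 1) → ι) → ℝ) :
    iidExpect μ (t + 1) F = iidExpect μ t fun I => ∑ b, μ b * F (Fin.cons b I) := by
  simp only [iidExpect, Fin.sum_pi_succ (m := t), Fin.prod_univ_succ, Fin.cons_zero,
    Fin.cons_succ, mul_sum]
  rw [sum_comm]
  exact sum_congr rfl fun I _ => sum_congr rfl fun b _ => by ring

lemma iidExpect_sub {t : ℕ} (F G : (Fin t → ι) → ℝ) :
    iidExpect μ t (F - G) = iidExpect μ t F - iidExpect μ t G := by
  simp only [iidExpect, Pi.sub_apply, mul_sub, sum_sub_distrib]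

lemma iidExpect_nonneg (hμ : ∀ i, 0 ≤ μ i) {t : ℕ} {F : (Fin t → ι) → ℝ} (hF : ∀ I, 0 ≤ F I) :
    0 ≤ iidExpect μ t F :=
  sum_nonneg fun I _ => mul_nonneg (prod_nonneg fun _ _ => hμ _) (hF I)

end IidExpectation

section DepthEntropy

variable {Ω ι β : Type*} [Fintype Ω] [Fintype ι] [Fintype β]
  (P : Ω → ℝ) (X : ι → Ω → β) (μ : ι → ℝ)

def depthEntropy (t : ℕ) : ℝ :=
  iidExpect μ t fun I => ∑ a, μ a * condEntropy P (X a) (fun ω s => X (I s) ω)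

lemma depthEntropy_nonneg (hP : ∀ ω, 0 ≤ P ω) (hμ : ∀ i, 0 ≤ μ i) (t : ℕ) :
    0 ≤ depthEntropy P X μ t :=
  iidExpect_nonneg μ hμ fun _ =>
    sum_nonneg fun a _ => mul_nonneg (hμ a) (condEntropy_nonneg P hP _ _)

lemma depthEntropy_zero_le (hP : ∀ ω, 0 ≤ P ω) (hP1 : ∑ ω, P ω = 1) (hμ : ∀ i, 0 ≤ μ i)
    (hμ1 : ∑ i, μ i = 1) : depthEntropy P X μ 0 ≤ log (Fintype.card β) := by
  rw [depthEntropy, iidExpect_zero]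
  calc ∑ a, μ a * condEntropy P (X a) _
      ≤ ∑ a, μ a * log (Fintype.card β) :=
        sum_le_sum fun a _ =>
          mul_le_mul_of_nonneg_left (condEntropy_le_log_card P hP hP1 _ _) (hμ a)
    _ = log (Fintype.card β) := by rw [← sum_mul, hμ1, one_mul]

end DepthEntropy

lemma iidExpect_condMI_eq_depthEntropy_sub {Ω ι : Type*} [Fintype Ω] [Fintype ι] (P : Ω → ℝ)
    (hP : ∀ ω, 0 ≤ P ω) {q : ℕ} (X : ι → Ω → Fin q) (μ : ι → ℝ) (hμ1 : ∑ i, μ i = 1)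
    (t : ℕ) :
    iidExpect μ t (fun I => ∑ a, ∑ b, μ a * μ b * condMI P (X a) (X b) (fun ω s => X (I s) ω)) =
      depthEntropy P X μ t - depthEntropy P X μ (t + 1) := by
  rw [depthEntropy, depthEntropy, iidExpect_succ, ← iidExpect_sub]
  congr 1
  funext I
  have hcons : ∀ b, (fun ω s => X (Fin.cons b I s) ω) =
      fun ω => (Fin.cons (X b ω) fun s => X (I s) ω : Fin (t + 1) → Fin q) :=
    fun b => funext fun ω => Fin.comp_cons (fun j => X j ω) b I
  simp only [Pi.sub_apply, condMI_eq_condEntropy_sub P hP, hcons, mul_sub, sum_sub_distrib]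
  congr 1
  · refine sum_congr rfl fun a _ => ?_
    rw [← sum_mul, ← mul_sum, hμ1, mul_one]
  · rw [sum_comm]
    refine sum_congr rfl fun b _ => ?_
    rw [mul_sum]
    exact sum_congr rfl fun a _ => by ring

/-- There is a conditioning depth `t < k` at which the expected (over i.i.d. choices
from `μ` of the conditioned variables, and of the pair `a, b`) conditional mutual
information `I(X_a ; X_b | X_{i₁},…,X_{i_t})` is at most `log q / k`. -/
theorem stmt_9 {Ω : Type} [Fintype Ω] (P : Ω → ℝ) (hP : ∀ ω, 0 ≤ P ω)
    (hP1 : ∑ ω, P ω = 1) {n q : ℕ} (X : Fin n → Ω → Fin q)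
    (μ : Fin n → ℝ) (hμ : ∀ i, 0 ≤ μ i) (hμ1 : ∑ i, μ i = 1)
    (k : ℕ) (hk : 0 < k) :
    ∃ t < k,
      (∑ I : Fin t → Fin n, (∏ s, μ (I s)) *
          ∑ a, ∑ b, μ a * μ b * condMI P (X a) (X b) (fun ω s => X (I s) ω)) ≤
        Real.log q / k := by
  set D := depthEntropy P X μ
  have hD0 : D 0 ≤ log q := by
    simpa using depthEntropy_zero_le P X μ hP hP1 hμ hμ1
  have hDk : 0 ≤ D k := depthEntropy_nonneg P X μ hP hμ k
  have htotal : ∑ t ∈ range k, (D t - D (t + 1)) ≤ ∑ _t ∈ range k, log q / k := by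
    rw [sum_range_sub', sum_const, card_range, nsmul_eq_mul,
      mul_div_cancel₀ _ (Nat.cast_ne_zero.mpr hk.ne')]
    linarith
  obtain ⟨t, ht, hle⟩ := exists_le_of_sum_le (nonempty_range_iff.mpr hk.ne') htotal
  exact ⟨t, mem_range.mp ht,
    (iidExpect_condMI_eq_depthEntropy_sub P hP X μ hμ1 t).trans_le hle⟩
end
end

section
/- Let G be a simple graph with adjacency matrix A, degree matrix D, and let v ∈ ℝⁿ be a nonnegative vector. Sample t with t² uniform in [0,1] and set xᵢ = 1 if vᵢ > t, else 0 (assuming 0 ≤ vᵢ ≤ 1 for all i). Then E[xᵀ(D-A)x] ≤ sqrt((vᵀDv)² - (vᵀAv)²). -/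
/-!
Round with a threshold `s = t²` uniform in `[0, 1]`. The vector `xₛ = 𝟙[s < vᵢ²]` satisfies
`xₛᵀ(D - A)xₛ = ∑ᵢ∑ⱼ Aᵢⱼ 𝟙[vⱼ² ≤ s < vᵢ²]`, so the expected cut is at most
`∑ᵢ∑ⱼ Aᵢⱼ (vᵢ² - vⱼ²)⁺ = ½ ∑ᵢ∑ⱼ Aᵢⱼ |vᵢ - vⱼ| |vᵢ + vⱼ|`. Cauchy–Schwarz with the weights `Aᵢⱼ`
bounds this by `½ √(∑ Aᵢⱼ (vᵢ - vⱼ)²) √(∑ Aᵢⱼ (vᵢ + vⱼ)²) = √(vᵀ(D - A)v · vᵀ(D + A)v)`.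
-/

open Finset Matrix MeasureTheory

theorem ite_lt_mul_sub_ite_lt (a b s : ℝ) :
    ((if s < a then 1 else 0) * ((if s < a then 1 else 0) - if s < b then 1 else 0) : ℝ) =
      (Set.Ico b a).indicator 1 s := by
  by_cases ha : s < a <;> by_cases hb : s < b <;>
    simp [ha, hb, le_of_not_gt]

theorem integrable_indicator_Ico_one (a b : ℝ) :
    Integrable ((Set.Ico a b).indicator (1 : ℝ → ℝ)) :=
  (integrable_indicator_iff measurableSet_Ico).2 (integrableOn_const (by simp))

theorem intervalIntegral_indicator_Ico_le {c d : ℝ} (hcd : c ≤ d) (a b : ℝ) :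
    ∫ s in c..d, (Set.Ico a b).indicator 1 s ≤ max (b - a) 0 := by
  rw [intervalIntegral.integral_of_le hcd]
  calc ∫ s in Set.Ioc c d, (Set.Ico a b).indicator 1 s
      ≤ ∫ s, (Set.Ico a b).indicator (1 : ℝ → ℝ) s :=
        setIntegral_le_integral (integrable_indicator_Ico_one a b)
          (Filter.Eventually.of_forall (Set.indicator_nonneg fun _ _ => zero_le_one))
    _ = max (b - a) 0 := by rw [integral_indicator_one measurableSet_Ico, Real.volume_real_Ico]

namespace Matrix

variable {ι : Type*} [Fintype ι] (A : Matrix ι ι ℝ)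

theorem dotProduct_mulVec_eq_sum_sum (x y : ι → ℝ) :
    x ⬝ᵥ A *ᵥ y = ∑ i, ∑ j, A i j * (x i * y j) := by
  simp only [dotProduct, mulVec, mul_sum]
  exact sum_congr rfl fun i _ => sum_congr rfl fun j _ => by ring

theorem dotProduct_diagonal_rowSum_mulVec [DecidableEq ι] (x : ι → ℝ) :
    x ⬝ᵥ diagonal (fun i => ∑ j, A i j) *ᵥ x = ∑ i, ∑ j, A i j * x i ^ 2 := by
  simp only [dotProduct, mulVec_diagonal, sum_mul, mul_sum]
  exact sum_congr rfl fun i _ => sum_congr rfl fun j _ => by ring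

theorem dotProduct_diagonal_rowSum_sub_mulVec [DecidableEq ι] (x : ι → ℝ) :
    x ⬝ᵥ (diagonal (fun i => ∑ j, A i j) - A) *ᵥ x = ∑ i, ∑ j, A i j * (x i * (x i - x j)) := by
  rw [sub_mulVec, dotProduct_sub, dotProduct_diagonal_rowSum_mulVec, dotProduct_mulVec_eq_sum_sum]
  simp only [← sum_sub_distrib]
  exact sum_congr rfl fun i _ => sum_congr rfl fun j _ => by ring

variable {A}

theorem IsSymm.sum_sum_mul_swap (hA : A.IsSymm) (f : ι → ι → ℝ) :
    ∑ i, ∑ j, A i j * f j i = ∑ i, ∑ j, A i j * f i j := by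
  rw [sum_comm]
  exact sum_congr rfl fun i _ => sum_congr rfl fun j _ => by rw [hA.apply j i]

theorem IsSymm.sum_sum_mul_sub_sq [DecidableEq ι] (hA : A.IsSymm) (x : ι → ℝ) :
    ∑ i, ∑ j, A i j * (x i - x j) ^ 2 =
      2 * (x ⬝ᵥ diagonal (fun i => ∑ j, A i j) *ᵥ x - x ⬝ᵥ A *ᵥ x) := by
  rw [dotProduct_diagonal_rowSum_mulVec, dotProduct_mulVec_eq_sum_sum]
  calc ∑ i, ∑ j, A i j * (x i - x j) ^ 2
      = ∑ i, ∑ j, A i j * x i ^ 2 + ∑ i, ∑ j, A i j * x j ^ 2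
          - 2 * ∑ i, ∑ j, A i j * (x i * x j) := by
        simp only [← sum_add_distrib, mul_sum, ← sum_sub_distrib]
        exact sum_congr rfl fun i _ => sum_congr rfl fun j _ => by ring
    _ = _ := by rw [hA.sum_sum_mul_swap fun i _ => x i ^ 2]; ring

theorem IsSymm.sum_sum_mul_add_sq [DecidableEq ι] (hA : A.IsSymm) (x : ι → ℝ) :
    ∑ i, ∑ j, A i j * (x i + x j) ^ 2 =
      2 * (x ⬝ᵥ diagonal (fun i => ∑ j, A i j) *ᵥ x + x ⬝ᵥ A *ᵥ x) := by
  rw [dotProduct_diagonal_rowSum_mulVec, dotProduct_mulVec_eq_sum_sum]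
  calc ∑ i, ∑ j, A i j * (x i + x j) ^ 2
      = ∑ i, ∑ j, A i j * x i ^ 2 + ∑ i, ∑ j, A i j * x j ^ 2
          + 2 * ∑ i, ∑ j, A i j * (x i * x j) := by
        simp only [← sum_add_distrib, mul_sum]
        exact sum_congr rfl fun i _ => sum_congr rfl fun j _ => by ring
    _ = _ := by rw [hA.sum_sum_mul_swap fun i _ => x i ^ 2]; ring

theorem IsSymm.two_mul_sum_sum_mul_max_sub (hA : A.IsSymm) (f : ι → ℝ) :
    2 * ∑ i, ∑ j, A i j * max (f i - f j) 0 = ∑ i, ∑ j, A i j * |f i - f j| := by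
  rw [two_mul]
  nth_rw 2 [← hA.sum_sum_mul_swap fun i j => max (f i - f j) 0]
  simp only [← sum_add_distrib, ← mul_add]
  refine sum_congr rfl fun i _ => sum_congr rfl fun j _ => ?_
  rw [← neg_sub (f i), max_zero_add_max_neg_zero_eq_abs_self]

theorem sq_sum_sum_mul_abs_sq_sub_sq_le (hA₀ : ∀ i j, 0 ≤ A i j) (x : ι → ℝ) :
    (∑ i, ∑ j, A i j * |x i ^ 2 - x j ^ 2|) ^ 2 ≤
      (∑ i, ∑ j, A i j * (x i - x j) ^ 2) * ∑ i, ∑ j, A i j * (x i + x j) ^ 2 := by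
  simp only [← Fintype.sum_prod_type']
  refine sum_sq_le_sum_mul_sum_of_sq_le_mul _ (fun p _ => by have := hA₀ p.1 p.2; positivity)
    (fun p _ => by have := hA₀ p.1 p.2; positivity) fun p _ => le_of_eq ?_
  rw [mul_pow, sq_abs]
  ring

theorem IsSymm.sum_sum_mul_max_sq_sub_sq_le_sqrt [DecidableEq ι] (hA : A.IsSymm)
    (hA₀ : ∀ i j, 0 ≤ A i j) (x : ι → ℝ) :
    ∑ i, ∑ j, A i j * max (x i ^ 2 - x j ^ 2) 0 ≤
      √((x ⬝ᵥ diagonal (fun i => ∑ j, A i j) *ᵥ x) ^ 2 - (x ⬝ᵥ A *ᵥ x) ^ 2) := by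
  have h := sq_sum_sum_mul_abs_sq_sub_sq_le hA₀ x
  rw [← hA.two_mul_sum_sum_mul_max_sub, hA.sum_sum_mul_sub_sq, hA.sum_sum_mul_add_sq] at h
  exact Real.le_sqrt_of_sq_le (by linarith)

theorem integral_threshold_laplacian_le [DecidableEq ι] (hA₀ : ∀ i j, 0 ≤ A i j) (u : ι → ℝ)
    {c d : ℝ} (hcd : c ≤ d) :
    ∫ s in c..d, (fun i => if s < u i then (1 : ℝ) else 0) ⬝ᵥ
        (diagonal (fun i => ∑ j, A i j) - A) *ᵥ (fun i => if s < u i then (1 : ℝ) else 0) ≤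
      ∑ i, ∑ j, A i j * max (u i - u j) 0 := by
  have hterm : ∀ i j, IntervalIntegrable
      (fun s => A i j * (Set.Ico (u j) (u i)).indicator 1 s) volume c d := fun i j =>
    ((integrable_indicator_Ico_one _ _).const_mul _).intervalIntegrable
  have hrow : ∀ i, IntervalIntegrable
      (fun s => ∑ j, A i j * (Set.Ico (u j) (u i)).indicator 1 s) volume c d := fun i => by
    simpa only [← Finset.sum_fn] using IntervalIntegrable.sum univ fun j _ => hterm i j
  simp only [dotProduct_diagonal_rowSum_sub_mulVec, ite_lt_mul_sub_ite_lt]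
  rw [intervalIntegral.integral_finsetSum fun i _ => hrow i]
  refine sum_le_sum fun i _ => ?_
  rw [intervalIntegral.integral_finsetSum fun j _ => hterm i j]
  refine sum_le_sum fun j _ => ?_
  rw [intervalIntegral.integral_const_mul]
  exact mul_le_mul_of_nonneg_left (intervalIntegral_indicator_Ico_le hcd _ _) (hA₀ i j)

end Matrix

theorem stmt_16_general {n : ℕ} (A : Matrix (Fin n) (Fin n) ℝ) (hA : A.IsSymm)
    (h01 : ∀ i j, A i j = 0 ∨ A i j = 1)
    (D : Matrix (Fin n) (Fin n) ℝ) (hD : D = Matrix.diagonal (fun i => ∑ j, A i j))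
    (v : Fin n → ℝ) :
    (∫ s in (0 : ℝ)..1,
        ((fun i => if s < v i ^ 2 then (1 : ℝ) else 0) ⬝ᵥ
          (D - A).mulVec (fun i => if s < v i ^ 2 then (1 : ℝ) else 0))) ≤
      Real.sqrt ((v ⬝ᵥ D.mulVec v) ^ 2 - (v ⬝ᵥ A.mulVec v) ^ 2) := by
  have hA₀ : ∀ i j, 0 ≤ A i j := fun i j => by rcases h01 i j with h | h <;> simp [h]
  subst hD
  exact (integral_threshold_laplacian_le hA₀ (fun i => v i ^ 2) zero_le_one).trans
    (hA.sum_sum_mul_max_sq_sub_sq_le_sqrt hA₀ v)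

/-- Cheeger-type threshold rounding: sampling `t` with `t²` uniform in `[0,1]` and
setting `xᵢ = 1` iff `vᵢ > t` (equivalently `vᵢ² > s` for `s` uniform in `[0,1]`),
the expected Laplacian quadratic form satisfies
`E[xᵀ(D-A)x] ≤ sqrt((vᵀDv)² - (vᵀAv)²)`. -/
theorem stmt_16 {n : ℕ} (A : Matrix (Fin n) (Fin n) ℝ) (hA : A.IsSymm)
    (h01 : ∀ i j, A i j = 0 ∨ A i j = 1) (hdiag : ∀ i, A i i = 0)
    (D : Matrix (Fin n) (Fin n) ℝ) (hD : D = Matrix.diagonal (fun i => ∑ j, A i j))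
    (v : Fin n → ℝ) (hv : ∀ i, 0 ≤ v i ∧ v i ≤ 1) :
    (∫ s in (0 : ℝ)..1,
        ((fun i => if s < v i ^ 2 then (1 : ℝ) else 0) ⬝ᵥ
          (D - A).mulVec (fun i => if s < v i ^ 2 then (1 : ℝ) else 0))) ≤
      Real.sqrt ((v ⬝ᵥ D.mulVec v) ^ 2 - (v ⬝ᵥ A.mulVec v) ^ 2) :=
  stmt_16_general A hA h01 D hD v
end
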